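/- Let I, J ⊆ {1,…,n} with I ≠ J, and assume that I ∩ J ≠ ∅ or that (I ∪ J) ≠ {1,…,n}. Let α, β ∈ ℂ with α ≠ 0 and β ≠ 0, and set c := α·Γ_I, d := β·Γ_J. Then there exists μ ∈ {1,…,n} such that q_{c,d}(Γ_μ) does not lie in the image ι(ℂⁿ) of the canonical embedding; in particular (c,d) is not a quadratic Clifford pair. (Two nonzero monomials can form a quadratic Clifford pair essentially only when their index sets coincide.) -/

import Mathlib

noncomputable section

/-- The quadratic form `Q(v) = -∑ v μ ^ 2` on `ℂⁿ`. -/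
def Qf (n : ℕ) : QuadraticForm ℂ (Fin n → ℂ) :=
  QuadraticMap.weightedSumSquares ℂ (fun _ : Fin n => (-1 : ℂ))

/-- The Clifford algebra of `Qf n`. -/
abbrev Cl (n : ℕ) := CliffordAlgebra (Qf n)

/-- The canonical embedding `ℂⁿ → Cℓ`. -/
def emb (n : ℕ) : (Fin n → ℂ) →ₗ[ℂ] Cl n := CliffordAlgebra.ι (Qf n)

/-- `Γ_μ = ι(e_μ)`. -/
def Γg (n : ℕ) (μ : Fin n) : Cl n := emb n (Pi.single μ 1)

/-- `Γ_I = Γ_{i₁} ⋯ Γ_{i_k}` with `i₁ < ⋯ < i_k` the elements of `I`. -/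
def ΓI (n : ℕ) (I : Finset (Fin n)) : Cl n :=
  ((I.sort (· ≤ ·)).map (Γg n)).prod

/-- `q_{a,b}(x) = a²x + xb² − 2axb`. -/
def qp {n : ℕ} (a b x : Cl n) : Cl n := a ^ 2 * x + x * b ^ 2 - 2 * a * x * b

/-- `s_{a,b}(x) = ax − xb`. -/
def sp {n : ℕ} (a b x : Cl n) : Cl n := a * x - x * b

/-- `σ_k = (−1)^{k(k+1)/2}`. -/
def σs (k : ℕ) : ℂ := (-1 : ℂ) ^ (k * (k + 1) / 2)

/-! ### Auxiliary lemmas -/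

/-- Product of generators indexed by a list. -/
def Pl (n : ℕ) (l : List (Fin n)) : Cl n := (l.map (Γg n)).prod

lemma Pl_nil (n : ℕ) : Pl n [] = 1 := rfl

lemma Pl_cons (n : ℕ) (a : Fin n) (t : List (Fin n)) :
    Pl n (a :: t) = Γg n a * Pl n t := by
  simp [Pl]

lemma ΓI_eq_Pl (n : ℕ) (I : Finset (Fin n)) : ΓI n I = Pl n (I.sort (· ≤ ·)) := rfl

lemma polar_single (n : ℕ) (μ : Fin n) (u : Fin n → ℂ) :
    QuadraticMap.polar (Qf n) (Pi.single μ 1) u = -2 * u μ := by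
  simp only [QuadraticMap.polar, Qf, QuadraticMap.weightedSumSquares_apply, smul_eq_mul,
    ← Finset.sum_sub_distrib, Pi.add_apply]
  rw [Finset.sum_eq_single μ]
  · simp; ring
  · intro b _ hb; simp [Pi.single_apply, hb]
  · simp

lemma Qf_single (n : ℕ) (μ : Fin n) : Qf n (Pi.single μ 1) = -1 := by
  simp [Qf, Pi.single_apply]

/-- Anticommutator of a generator with an arbitrary vector. -/
lemma anticomm (n : ℕ) (μ : Fin n) (u : Fin n → ℂ) :
    Γg n μ * emb n u + emb n u * Γg n μ = algebraMap ℂ (Cl n) (-2 * u μ) := by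
  rw [← polar_single n μ u]
  exact CliffordAlgebra.ι_mul_ι_add_swap _ _

lemma gamma_sq (n : ℕ) (μ : Fin n) :
    Γg n μ * Γg n μ = algebraMap ℂ (Cl n) (-1) := by
  rw [← Qf_single n μ]
  exact CliffordAlgebra.ι_sq_scalar _ _

lemma gamma_sq' (n : ℕ) (μ : Fin n) : Γg n μ * Γg n μ = -1 := by
  rw [gamma_sq]; simp

lemma gamma_anticomm (n : ℕ) {ρ τ : Fin n} (h : ρ ≠ τ) :
    Γg n ρ * Γg n τ = -(Γg n τ * Γg n ρ) := by
  have h2 := anticomm n ρ (Pi.single τ 1)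
  rw [show emb n (Pi.single τ 1) = Γg n τ from rfl, Pi.single_eq_of_ne h] at h2
  simp only [mul_zero, neg_mul, neg_zero, map_zero] at h2
  exact eq_neg_of_add_eq_zero_left h2

lemma gamma_isUnit (n : ℕ) (μ : Fin n) : IsUnit (Γg n μ) := by
  refine ⟨⟨Γg n μ, -(Γg n μ), ?_, ?_⟩, rfl⟩
  · rw [mul_neg, gamma_sq']; simp
  · rw [neg_mul, gamma_sq']; simp

lemma Pl_isUnit (n : ℕ) (l : List (Fin n)) : IsUnit (Pl n l) := by
  induction l with
  | nil => exact isUnit_one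
  | cons a t ih => rw [Pl_cons]; exact (gamma_isUnit n a).mul ih

/-- Commutation of a generator past a product of generators. -/
lemma gamma_comm_Pl (n : ℕ) (l : List (Fin n)) (ρ : Fin n) :
    Γg n ρ * Pl n l = ((-1 : ℂ) ^ (l.length - l.count ρ)) • (Pl n l * Γg n ρ) := by
  induction l with
  | nil =>
      simp [Pl_nil]
  | cons a t ih =>
      rw [Pl_cons]
      by_cases ha : a = ρ
      · subst ha
        have hcount : (a :: t).length - (a :: t).count a = t.length - t.count a := by
          rw [List.count_cons_self, List.length_cons]
          omega
        rw [hcount]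
        calc Γg n a * (Γg n a * Pl n t)
            = Γg n a * (((-1 : ℂ) ^ (t.length - t.count a)) • (Pl n t * Γg n a)) := by rw [ih]
          _ = ((-1 : ℂ) ^ (t.length - t.count a)) • (Γg n a * Pl n t * Γg n a) := by
              rw [mul_smul_comm, mul_assoc]
      · have hcount : (a :: t).length - (a :: t).count ρ = (t.length - t.count ρ) + 1 := by
          have : t.count ρ ≤ t.length := List.count_le_length
          rw [List.length_cons, List.count_cons_of_ne ha]
          omega
        rw [hcount, pow_succ]
        calc Γg n ρ * (Γg n a * Pl n t)
            = (Γg n ρ * Γg n a) * Pl n t := by rw [mul_assoc]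
          _ = -(Γg n a * (Γg n ρ * Pl n t)) := by
              rw [gamma_anticomm n (fun hh => ha hh.symm)]; noncomm_ring
          _ = -(Γg n a * (((-1 : ℂ) ^ (t.length - t.count ρ)) • (Pl n t * Γg n ρ))) := by
              rw [ih]
          _ = ((-1 : ℂ) ^ (t.length - t.count ρ) * -1) • (Γg n a * Pl n t * Γg n ρ) := by
              rw [mul_smul_comm, mul_neg_one, neg_smul, mul_assoc]

lemma Pl_sq (n : ℕ) (l : List (Fin n)) (h : l.Nodup) :
    ∃ s : ℂ, Pl n l * Pl n l = algebraMap ℂ (Cl n) s := by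
  induction l with
  | nil => exact ⟨1, by simp [Pl_nil]⟩
  | cons a t ih =>
      obtain ⟨ha, ht⟩ := List.nodup_cons.mp h
      obtain ⟨s, hs⟩ := ih ht
      have hcnt : t.count a = 0 := List.count_eq_zero_of_not_mem ha
      have hcomm := gamma_comm_Pl n t a
      rw [hcnt, Nat.sub_zero] at hcomm
      have hPt : Pl n t * Γg n a = ((-1 : ℂ) ^ t.length) • (Γg n a * Pl n t) := by
        rw [hcomm, smul_smul, ← pow_add, Even.neg_one_pow ⟨t.length, rfl⟩, one_smul]
      refine ⟨(-1 : ℂ) ^ t.length * -1 * s, ?_⟩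
      rw [Pl_cons]
      calc (Γg n a * Pl n t) * (Γg n a * Pl n t)
          = Γg n a * ((Pl n t * Γg n a) * Pl n t) := by noncomm_ring
        _ = Γg n a * ((((-1 : ℂ) ^ t.length) • (Γg n a * Pl n t)) * Pl n t) := by rw [hPt]
        _ = ((-1 : ℂ) ^ t.length) • ((Γg n a * Γg n a) * (Pl n t * Pl n t)) := by
            rw [smul_mul_assoc, mul_smul_comm]; congr 1; noncomm_ring
        _ = ((-1 : ℂ) ^ t.length) • ((algebraMap ℂ (Cl n) (-1)) * (algebraMap ℂ (Cl n) s)) := by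
            rw [gamma_sq, hs]
        _ = algebraMap ℂ (Cl n) ((-1 : ℂ) ^ t.length * -1 * s) := by
            rw [← map_mul, Algebra.smul_def, ← map_mul, mul_assoc]

lemma Pl_mem_evenOdd (n : ℕ) (l : List (Fin n)) :
    Pl n l ∈ CliffordAlgebra.evenOdd (Qf n) (l.length : ZMod 2) := by
  induction l with
  | nil =>
      rw [Pl_nil]
      have h0 : ((([] : List (Fin n)).length : ℕ) : ZMod 2) = 0 := by norm_num
      rw [h0]
      exact Submodule.one_le.mp (CliffordAlgebra.one_le_evenOdd_zero (Qf n))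
  | cons a t ih =>
      rw [Pl_cons]
      have hc : ((a :: t).length : ZMod 2) = 1 + (t.length : ZMod 2) := by
        rw [List.length_cons]
        push_cast
        ring
      rw [hc]
      exact CliffordAlgebra.evenOdd_mul_le (Qf n) 1 (t.length : ZMod 2)
        (Submodule.mul_mem_mul (CliffordAlgebra.ι_mem_evenOdd_one (Qf n) _) ih)

lemma evenOdd_cap (n : ℕ) (x : Cl n)
    (h0 : x ∈ CliffordAlgebra.evenOdd (Qf n) 0)
    (h1 : x ∈ CliffordAlgebra.evenOdd (Qf n) 1) : x = 0 := by
  have e1 := DirectSum.decompose_of_mem_same (CliffordAlgebra.evenOdd (Qf n)) h0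
  have e2 := DirectSum.decompose_of_mem_ne (CliffordAlgebra.evenOdd (Qf n)) h1
    (by decide : (1 : ZMod 2) ≠ 0)
  have e3 : ((DirectSum.decompose (CliffordAlgebra.evenOdd (Qf n)) x 0 : _) : Cl n) = 0 := by
    simp [e2]
  exact e1.symm.trans e3

lemma key_even (n : ℕ) (l : List (Fin n)) (hlen : (l.length : ZMod 2) = 0)
    (u : Fin n → ℂ) : Pl n l ≠ emb n u := by
  intro h
  have h0 : Pl n l ∈ CliffordAlgebra.evenOdd (Qf n) 0 := by
    have := Pl_mem_evenOdd n l
    rwa [hlen] at this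
  have h1 : Pl n l ∈ CliffordAlgebra.evenOdd (Qf n) 1 := by
    rw [h]; exact CliffordAlgebra.ι_mem_evenOdd_one (Qf n) u
  exact (Pl_isUnit n l).ne_zero (evenOdd_cap n _ h0 h1)

lemma algebraMap_inj (n : ℕ) : Function.Injective (algebraMap ℂ (Cl n)) :=
  RingHom.injective _

lemma key_odd (n : ℕ) (l : List (Fin n)) (μ ρ : Fin n) (hne : ρ ≠ μ)
    (h1 : Even (l.length - l.count μ)) (h2 : Even (l.length - l.count ρ))
    (u : Fin n → ℂ) : Pl n l ≠ emb n u := by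
  intro h
  have cμ : Γg n μ * Pl n l = Pl n l * Γg n μ := by
    rw [gamma_comm_Pl, Even.neg_one_pow h1, one_smul]
  have cρ : Γg n ρ * Pl n l = Pl n l * Γg n ρ := by
    rw [gamma_comm_Pl, Even.neg_one_pow h2, one_smul]
  have key : ∀ τ : Fin n, Γg n τ * Pl n l = Pl n l * Γg n τ →
      Pl n l * Γg n τ = algebraMap ℂ (Cl n) (-(u τ)) := by
    intro τ hτ
    have hac := anticomm n τ u
    rw [← h, hτ] at hac
    have h2s : (2 : ℂ) • (Pl n l * Γg n τ) = (2 : ℂ) • (algebraMap ℂ (Cl n) (-(u τ))) := by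
      rw [two_smul, two_smul, hac, ← map_add]
      congr 1
      ring
    have h3 := congrArg (fun y => ((2 : ℂ)⁻¹) • y) h2s
    simpa [smul_smul] using h3
  have pμ := key μ cμ
  have pρ := key ρ cρ
  -- P l = u μ • Γ μ
  have hPl : Pl n l = (u μ) • Γg n μ := by
    have h3 := congrArg (fun y => y * Γg n μ) pμ
    rw [mul_assoc, gamma_sq', mul_neg_one, ← Algebra.smul_def] at h3
    exact neg_injective (h3.trans (neg_smul (u μ) (Γg n μ)))
  -- the anticommutator with ρ is then zero, forcing u ρ = 0
  have hzero : u ρ = 0 := by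
    have hac := anticomm n ρ u
    rw [← h, hPl] at hac
    rw [mul_smul_comm, smul_mul_assoc, ← smul_add,
      gamma_anticomm n hne, neg_add_cancel, smul_zero] at hac
    have hz2 : (-2 : ℂ) * u ρ = 0 := by
      apply algebraMap_inj n
      rw [map_zero, ← hac]
    have h2ne : (-2 : ℂ) ≠ 0 := by norm_num
    exact (mul_eq_zero.mp hz2).resolve_left h2ne
  have hunit : IsUnit (Pl n l * Γg n ρ) := (Pl_isUnit n l).mul (gamma_isUnit n ρ)
  rw [pρ, hzero, neg_zero, map_zero] at hunit
  exact hunit.ne_zero rfl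

/-- two nonzero monomials with distinct index sets that overlap or do not
cover everything never form a quadratic Clifford pair. -/
theorem stmt_1 (n : ℕ) (hn : 1 ≤ n) (I J : Finset (Fin n)) (hIJ : I ≠ J)
    (hover : (I ∩ J).Nonempty ∨ I ∪ J ≠ Finset.univ)
    (α β : ℂ) (hα : α ≠ 0) (hβ : β ≠ 0)
    (c d : Cl n) (hc : c = α • ΓI n I) (hd : d = β • ΓI n J) :
    ∃ μ : Fin n, qp c d (Γg n μ) ∉ Set.range (emb n) := by
  classical
  have hsd : (symmDiff I J).Nonempty := by
    rw [Finset.nonempty_iff_ne_empty]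
    intro hbot
    exact hIJ (symmDiff_eq_bot.mp hbot)
  obtain ⟨ρ₀, hρ₀⟩ := hsd
  rw [Finset.mem_symmDiff] at hρ₀
  obtain ⟨μ, hμ⟩ : ∃ μ : Fin n, (μ ∈ I ∧ μ ∈ J) ∨ (μ ∉ I ∧ μ ∉ J) := by
    rcases hover with h | h
    · obtain ⟨μ, hμ⟩ := h
      rw [Finset.mem_inter] at hμ
      exact ⟨μ, Or.inl hμ⟩
    · obtain ⟨μ, hμ'⟩ : ∃ μ, μ ∉ I ∪ J := by
        by_contra hall
        push_neg at hall
        exact h (Finset.eq_univ_iff_forall.mpr hall)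
      exact ⟨μ, Or.inr ⟨fun hh => hμ' (Finset.mem_union_left _ hh),
        fun hh => hμ' (Finset.mem_union_right _ hh)⟩⟩
  have hρμ : ρ₀ ≠ μ := by
    rintro rfl
    rcases hρ₀ with ⟨hI, hJ⟩ | ⟨hJ, hI⟩ <;> rcases hμ with ⟨h1, h2⟩ | ⟨h1, h2⟩ <;> tauto
  refine ⟨μ, ?_⟩
  intro hmem
  set lI := I.sort (· ≤ ·) with hlI
  set lJ := J.sort (· ≤ ·) with hlJ
  set l : List (Fin n) := lI ++ μ :: lJ with hl
  have hsplit : Pl n l = ΓI n I * Γg n μ * ΓI n J := by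
    rw [hl, Pl, List.map_append, List.prod_append, List.map_cons, List.prod_cons,
      ΓI_eq_Pl, ΓI_eq_Pl, ← hlI, ← hlJ, mul_assoc]
    rfl
  obtain ⟨sI, hsI⟩ := Pl_sq n lI (Finset.sort_nodup _ _)
  obtain ⟨sJ, hsJ⟩ := Pl_sq n lJ (Finset.sort_nodup _ _)
  have htwo : (2 : Cl n) = algebraMap ℂ (Cl n) 2 := by rw [map_ofNat]
  have hq : qp c d (Γg n μ) =
      (α ^ 2 * sI + β ^ 2 * sJ) • Γg n μ - (2 * α * β) • Pl n l := by
    have e1 : c ^ 2 * Γg n μ = (α ^ 2 * sI) • Γg n μ := by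
      rw [hc, smul_pow, ΓI_eq_Pl, ← hlI, pow_two (Pl n lI), hsI, smul_mul_assoc,
        ← Algebra.smul_def, smul_smul]
    have e2 : Γg n μ * d ^ 2 = (β ^ 2 * sJ) • Γg n μ := by
      rw [hd, smul_pow, ΓI_eq_Pl, ← hlJ, pow_two (Pl n lJ), hsJ, mul_smul_comm,
        ← Algebra.commutes, ← Algebra.smul_def, smul_smul]
    have e3 : 2 * c * Γg n μ * d = (2 * α * β) • Pl n l := by
      rw [hc, hd, hsplit, htwo, ← Algebra.smul_def]
      simp only [smul_mul_assoc, mul_smul_comm, smul_smul]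
      congr 1
      ring
    rw [qp, e1, e2, e3, add_smul]
  have hPl_mem : Pl n l ∈ LinearMap.range (emb n) := by
    obtain ⟨w, hw⟩ := hmem
    have hαβ : (2 * α * β : ℂ) ≠ 0 := mul_ne_zero (mul_ne_zero two_ne_zero hα) hβ
    have hmem2 : (2 * α * β) • Pl n l ∈ LinearMap.range (emb n) := by
      have hswap : (2 * α * β) • Pl n l =
          (α ^ 2 * sI + β ^ 2 * sJ) • Γg n μ - qp c d (Γg n μ) := by
        rw [hq, sub_sub_cancel]
      rw [hswap, ← hw]
      exact Submodule.sub_mem _ (Submodule.smul_mem _ _ ⟨Pi.single μ 1, rfl⟩) ⟨w, rfl⟩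
    have := Submodule.smul_mem (LinearMap.range (emb n)) (2 * α * β : ℂ)⁻¹ hmem2
    rwa [inv_smul_smul₀ hαβ] at this
  obtain ⟨u, hu⟩ := hPl_mem
  have hlen : l.length = I.card + (1 + J.card) := by
    rw [hl, List.length_append, List.length_cons, hlI, hlJ,
      Finset.length_sort, Finset.length_sort]
    omega
  have hcount : ∀ τ : Fin n, l.count τ =
      (if τ ∈ I then 1 else 0) + ((if τ = μ then 1 else 0) + (if τ ∈ J then 1 else 0)) := by
    intro τ
    have cI : lI.count τ = if τ ∈ I then 1 else 0 := by
      by_cases hτ : τ ∈ I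
      · rw [if_pos hτ]
        exact List.count_eq_one_of_mem (Finset.sort_nodup _ _) ((Finset.mem_sort _).mpr hτ)
      · rw [if_neg hτ]
        exact List.count_eq_zero_of_not_mem (fun hh => hτ ((Finset.mem_sort _).mp hh))
    have cJ : lJ.count τ = if τ ∈ J then 1 else 0 := by
      by_cases hτ : τ ∈ J
      · rw [if_pos hτ]
        exact List.count_eq_one_of_mem (Finset.sort_nodup _ _) ((Finset.mem_sort _).mpr hτ)
      · rw [if_neg hτ]
        exact List.count_eq_zero_of_not_mem (fun hh => hτ ((Finset.mem_sort _).mp hh))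
    rw [hl, List.count_append, List.count_cons, cI, cJ]
    simp only [beq_iff_eq]
    split_ifs <;> omega
  rcases Nat.even_or_odd l.length with hev | hodd
  · refine key_even n l ?_ u hu.symm
    exact (ZMod.natCast_eq_zero_iff _ 2).mpr hev.two_dvd
  · have hcμ : Odd (l.count μ) := by
      rw [hcount μ]
      rcases hμ with ⟨h1, h2⟩ | ⟨h1, h2⟩
      · rw [if_pos h1, if_pos h2, if_pos rfl]; decide
      · rw [if_neg h1, if_neg h2, if_pos rfl]; decide
    have hcρ : l.count ρ₀ = 1 := by
      rw [hcount ρ₀, if_neg hρμ]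
      rcases hρ₀ with ⟨hI', hJ'⟩ | ⟨hJ', hI'⟩
      · rw [if_pos hI', if_neg hJ']
      · rw [if_neg hI', if_pos hJ']
    refine key_odd n l μ ρ₀ hρμ ?_ ?_ u hu.symm
    · exact Nat.Odd.sub_odd hodd hcμ
    · exact Nat.Odd.sub_odd hodd (by rw [hcρ]; exact odd_one)
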